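/- Let n ∈ ℕ, k ∈ ℕ, let K ⊆ ℝⁿ be compact, and let F : ℝⁿ → ℝ be a smooth function. Then for every ε > 0 there exists a polynomial function P' : ℝⁿ → ℝ with rational coefficients such that max over all multi-indices β ∈ ℕⁿ with |β| ≤ k of sup_{x ∈ K} |(D^β F)(x) − (D^β P')(x)| < ε. In other words, the n-dimensional polynomial functions with rational coefficients are dense in the smooth functions ℝⁿ → ℝ with respect to the pseudometric d_K^k(F, G) := max_{|β| ≤ k} sup_{x ∈ K} |(D^β F)(x) − (D^β G)(x)|. -/

import Mathlib

/-- The partial derivative of `F : ℝⁿ → ℝ` in the `i`-th coordinate direction. -/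
noncomputable def partialDeriv' {n : ℕ} (i : Fin n) (F : (Fin n → ℝ) → ℝ) :
    (Fin n → ℝ) → ℝ :=
  fun x => fderiv ℝ F x (Pi.single i 1)

/-- The iterated partial derivative `D^β F` for a multi-index `β ∈ ℕⁿ`. -/
noncomputable def multiDeriv {n : ℕ} (β : Fin n → ℕ) (F : (Fin n → ℝ) → ℝ) :
    (Fin n → ℝ) → ℝ :=
  (List.finRange n).foldr (fun i G => (partialDeriv' i)^[β i] G) F

namespace RPD
open MvPolynomial Function

variable {n : ℕ}

noncomputable def evp (p : MvPolynomial (Fin n) ℝ) : (Fin n → ℝ) → ℝ :=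
  fun x => MvPolynomial.eval x p

noncomputable def mD (l : List (Fin n)) (β : Fin n → ℕ) (F : (Fin n → ℝ) → ℝ) :
    (Fin n → ℝ) → ℝ :=
  l.foldr (fun i G => (partialDeriv' i)^[β i] G) F

lemma multiDeriv_eq_mD (β : Fin n → ℕ) (F : (Fin n → ℝ) → ℝ) :
    multiDeriv β F = mD (List.finRange n) β F := rfl

lemma evp_add (p q : MvPolynomial (Fin n) ℝ) : evp (p + q) = evp p + evp q := by
  funext x; simp [evp]

lemma smooth_evp (p : MvPolynomial (Fin n) ℝ) : ContDiff ℝ (⊤ : ℕ∞) (evp p) := by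
  unfold evp
  apply p.induction_on (motive := fun p => ContDiff ℝ (⊤ : ℕ∞) fun x => MvPolynomial.eval x p)
  · intro a; simpa using contDiff_const
  · intro p q hp hq; simpa using hp.add hq
  · intro p i hp
    simp only [eval_mul, eval_X]
    exact hp.mul (contDiff_apply ℝ ℝ i)

lemma diff_evp (p : MvPolynomial (Fin n) ℝ) : Differentiable ℝ (evp p) :=
  (smooth_evp p).differentiable (by simp)

lemma pd_evp (i : Fin n) (p : MvPolynomial (Fin n) ℝ) :
    partialDeriv' i (evp p) = evp (pderiv i p) := by
  apply p.induction_on (motive := fun p => partialDeriv' i (evp p) = evp (pderiv i p))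
  · intro a
    funext x
    have : evp (C a : MvPolynomial (Fin n) ℝ) = fun _ => a := by funext y; simp [evp]
    simp [partialDeriv', this, pderiv_C, evp]
  · intro p q hp hq
    funext x
    simp only [partialDeriv', evp_add, map_add]
    rw [fderiv_add (diff_evp p).differentiableAt (diff_evp q).differentiableAt]
    have hp' := congrFun hp x
    have hq' := congrFun hq x
    simp only [partialDeriv'] at hp' hq'
    simp [evp_add, hp', hq']
  · intro p j hp
    funext x
    have hXj : evp (p * X j) = fun y => evp p y * y j := by funext y; simp [evp]
    have hproj : (fun y : Fin n → ℝ => y j) = (ContinuousLinearMap.proj (R := ℝ)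
        (φ := fun _ : Fin n => ℝ) j : ((Fin n → ℝ)) →L[ℝ] ℝ) := rfl
    simp only [partialDeriv', hXj]
    rw [fderiv_fun_mul (diff_evp p).differentiableAt (by
      rw [hproj]
      exact (ContinuousLinearMap.proj (R := ℝ) (φ := fun _ : Fin n => ℝ) j).differentiableAt)]
    have hfp : fderiv ℝ (fun y : Fin n → ℝ => y j) x = ContinuousLinearMap.proj j := by
      rw [hproj]; exact ContinuousLinearMap.fderiv _
    have hp' := congrFun hp x
    simp only [partialDeriv'] at hp'
    simp only [ContinuousLinearMap.add_apply, ContinuousLinearMap.smul_apply, hfp, hp',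
      ContinuousLinearMap.proj_apply, smul_eq_mul]
    rw [pderiv_mul]
    have hsing : Pi.single (M := fun _ : Fin n => ℝ) i 1 j = if i = j then (1:ℝ) else 0 := by
      rcases eq_or_ne i j with h | h
      · subst h; simp
      · simp [Pi.single_eq_of_ne (Ne.symm h), h]
    simp only [evp, map_add, eval_mul, eval_X, pderiv_X, hsing]
    rcases eq_or_ne i j with h | h
    · subst h; simp [mul_comm]; ring
    · simp [h, Pi.single_eq_of_ne (Ne.symm h)]
      ring

-- smoothness preservation
lemma smooth_pd {F : (Fin n → ℝ) → ℝ} (hF : ContDiff ℝ (⊤ : ℕ∞) F) (i : Fin n) :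
    ContDiff ℝ (⊤ : ℕ∞) (partialDeriv' i F) := by
  have h1 : ContDiff ℝ (⊤ : ℕ∞) (fderiv ℝ F) := hF.fderiv_right (by simp)
  exact h1.clm_apply contDiff_const

lemma smooth_pd_iter {F : (Fin n → ℝ) → ℝ} (hF : ContDiff ℝ (⊤ : ℕ∞) F) (i : Fin n) (m : ℕ) :
    ContDiff ℝ (⊤ : ℕ∞) ((partialDeriv' i)^[m] F) := by
  induction m generalizing F with
  | zero => simpa using hF
  | succ m ih =>
    rw [Function.iterate_succ_apply]
    exact ih (smooth_pd hF i)

lemma smooth_mD {F : (Fin n → ℝ) → ℝ} (hF : ContDiff ℝ (⊤ : ℕ∞) F) (l : List (Fin n))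
    (β : Fin n → ℕ) : ContDiff ℝ (⊤ : ℕ∞) (mD l β F) := by
  induction l generalizing F with
  | nil => simpa [mD] using hF
  | cons a l ih =>
    simp only [mD, List.foldr_cons]
    exact smooth_pd_iter (ih hF) a (β a)

-- subtraction
lemma pd_sub {F G : (Fin n → ℝ) → ℝ} (hF : Differentiable ℝ F) (hG : Differentiable ℝ G)
    (i : Fin n) : partialDeriv' i (F - G) = partialDeriv' i F - partialDeriv' i G := by
  funext x
  simp only [partialDeriv', Pi.sub_apply]
  rw [fderiv_sub hF.differentiableAt hG.differentiableAt]
  simp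

lemma pd_iter_sub {F G : (Fin n → ℝ) → ℝ} (hF : ContDiff ℝ (⊤ : ℕ∞) F) (hG : ContDiff ℝ (⊤ : ℕ∞) G)
    (i : Fin n) (m : ℕ) :
    (partialDeriv' i)^[m] (F - G) = (partialDeriv' i)^[m] F - (partialDeriv' i)^[m] G := by
  induction m generalizing F G with
  | zero => simp
  | succ m ih =>
    simp only [Function.iterate_succ_apply]
    rw [pd_sub (hF.differentiable (by simp)) (hG.differentiable (by simp))]
    exact ih (smooth_pd hF i) (smooth_pd hG i)

lemma mD_sub {F G : (Fin n → ℝ) → ℝ} (hF : ContDiff ℝ (⊤ : ℕ∞) F) (hG : ContDiff ℝ (⊤ : ℕ∞) G)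
    (l : List (Fin n)) (β : Fin n → ℕ) :
    mD l β (F - G) = mD l β F - mD l β G := by
  induction l generalizing F G with
  | nil => simp [mD]
  | cons a l ih =>
    simp only [mD, List.foldr_cons] at ih ⊢
    rw [ih hF hG]
    exact pd_iter_sub (smooth_mD hF l β) (smooth_mD hG l β) a (β a)

-- Schwarz
lemma pd_swap {F : (Fin n → ℝ) → ℝ} (hF : ContDiff ℝ (⊤ : ℕ∞) F) (i j : Fin n) :
    partialDeriv' i (partialDeriv' j F) = partialDeriv' j (partialDeriv' i F) := by
  funext x
  have hsym : IsSymmSndFDerivAt ℝ F x := (hF.contDiffAt).isSymmSndFDerivAt (by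
    rw [minSmoothness_of_isRCLikeNormedField]; exact WithTop.coe_le_coe.mpr (le_top : (2 : ℕ∞) ≤ ⊤))
  have hd : Differentiable ℝ (fderiv ℝ F) :=
    (hF.fderiv_right (m := (⊤ : ℕ∞)) (by simp)).differentiable (by simp)
  have key : ∀ v w : Fin n → ℝ,
      fderiv ℝ (fun y => fderiv ℝ F y w) x v = fderiv ℝ (fderiv ℝ F) x v w := by
    intro v w
    rw [fderiv_clm_apply hd.differentiableAt (differentiableAt_const w)]
    simp
  show fderiv ℝ (fun y => fderiv ℝ F y (Pi.single j 1)) x (Pi.single i 1)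
      = fderiv ℝ (fun y => fderiv ℝ F y (Pi.single i 1)) x (Pi.single j 1)
  rw [key (Pi.single i 1) (Pi.single j 1), key (Pi.single j 1) (Pi.single i 1)]
  exact hsym.eq _ _


lemma pd_iter_swap {F : (Fin n → ℝ) → ℝ} (hF : ContDiff ℝ (⊤ : ℕ∞) F) (i j : Fin n) (m : ℕ) :
    partialDeriv' j ((partialDeriv' i)^[m] F) = (partialDeriv' i)^[m] (partialDeriv' j F) := by
  induction m generalizing F with
  | zero => simp
  | succ m ih =>
    simp only [Function.iterate_succ_apply]
    rw [ih (smooth_pd hF i)]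
    congr 1
    exact pd_swap hF j i

lemma pd_mD_comm {F : (Fin n → ℝ) → ℝ} (hF : ContDiff ℝ (⊤ : ℕ∞) F) (l : List (Fin n))
    (β : Fin n → ℕ) (j : Fin n) :
    partialDeriv' j (mD l β F) = mD l β (partialDeriv' j F) := by
  induction l generalizing F with
  | nil => simp [mD]
  | cons a l ih =>
    show partialDeriv' j ((partialDeriv' a)^[β a] (mD l β F))
        = (partialDeriv' a)^[β a] (mD l β (partialDeriv' j F))
    rw [pd_iter_swap (smooth_mD hF l β) a j (β a), ih hF]

lemma pd_iter_mD_comm {F : (Fin n → ℝ) → ℝ} (hF : ContDiff ℝ (⊤ : ℕ∞) F) (l : List (Fin n))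
    (β : Fin n → ℕ) (j : Fin n) (m : ℕ) :
    (partialDeriv' j)^[m] (mD l β F) = mD l β ((partialDeriv' j)^[m] F) := by
  induction m generalizing F with
  | zero => simp
  | succ m ih =>
    simp only [Function.iterate_succ_apply]
    rw [pd_mD_comm hF l β j, ih (smooth_pd hF j)]


lemma mD_congr {F : (Fin n → ℝ) → ℝ} {β γ : Fin n → ℕ} (l : List (Fin n))
    (h : ∀ i ∈ l, β i = γ i) : mD l β F = mD l γ F := by
  induction l with
  | nil => simp [mD]
  | cons a l ih =>
    simp only [mD, List.foldr_cons] at *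
    rw [ih fun i hi => h i (List.mem_cons_of_mem a hi), h a List.mem_cons_self]

lemma mD_zero {F : (Fin n → ℝ) → ℝ} {β : Fin n → ℕ} (l : List (Fin n))
    (h : ∀ i ∈ l, β i = 0) : mD l β F = F := by
  induction l with
  | nil => simp [mD]
  | cons a l ih =>
    simp only [mD, List.foldr_cons] at *
    rw [h a List.mem_cons_self]
    simpa using ih fun i hi => h i (List.mem_cons_of_mem a hi)

lemma mD_append (l₁ l₂ : List (Fin n)) (β : Fin n → ℕ) (F : (Fin n → ℝ) → ℝ) :
    mD (l₁ ++ l₂) β F = mD l₁ β (mD l₂ β F) := by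
  simp [mD, List.foldr_append]

lemma finRange_split (j : Fin n) :
    ∃ l₁ l₂ : List (Fin n), List.finRange n = l₁ ++ j :: l₂ ∧ j ∉ l₁ ∧ j ∉ l₂ := by
  obtain ⟨l₁, l₂, h⟩ := List.append_of_mem (List.mem_finRange j)
  refine ⟨l₁, l₂, h, ?_, ?_⟩
  · have hnd := List.nodup_finRange n
    rw [h, List.nodup_append] at hnd
    intro hmem
    exact hnd.2.2 j hmem j List.mem_cons_self rfl
  · have hnd := List.nodup_finRange n
    rw [h, List.nodup_append] at hnd
    exact (List.nodup_cons.mp hnd.2.1).1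

lemma multiDeriv_L2 {F : (Fin n → ℝ) → ℝ} (hF : ContDiff ℝ (⊤ : ℕ∞) F) (β : Fin n → ℕ) (j : Fin n) :
    multiDeriv β F =
      multiDeriv (Function.update β j 0) ((partialDeriv' j)^[β j] F) := by
  obtain ⟨l₁, l₂, hsplit, hj1, hj2⟩ := finRange_split j
  rw [multiDeriv_eq_mD, multiDeriv_eq_mD, hsplit]
  have mjl : ∀ (γ : Fin n → ℕ) (G : (Fin n → ℝ) → ℝ),
      mD [j] γ G = (partialDeriv' j)^[γ j] G := fun γ G => rfl
  have hsp : (l₁ ++ j :: l₂ : List (Fin n)) = l₁ ++ ([j] ++ l₂) := by simp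
  have h1 : ∀ i ∈ l₁, β i = Function.update β j 0 i := fun i hi =>
    (Function.update_of_ne (by rintro rfl; exact hj1 hi) 0 β).symm
  have h2 : ∀ i ∈ l₂, β i = Function.update β j 0 i := fun i hi =>
    (Function.update_of_ne (by rintro rfl; exact hj2 hi) 0 β).symm
  calc mD (l₁ ++ j :: l₂) β F
      = mD l₁ β (mD [j] β (mD l₂ β F)) := by rw [hsp, mD_append, mD_append]
    _ = mD l₁ β ((partialDeriv' j)^[β j] (mD l₂ β F)) := by rw [mjl]
    _ = mD l₁ β (mD l₂ β ((partialDeriv' j)^[β j] F)) := by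
        rw [pd_iter_mD_comm hF l₂ β j (β j)]
    _ = mD l₁ (Function.update β j 0)
          (mD l₂ (Function.update β j 0) ((partialDeriv' j)^[β j] F)) := by
        rw [mD_congr l₂ h2, mD_congr l₁ h1]
    _ = mD (l₁ ++ j :: l₂) (Function.update β j 0) ((partialDeriv' j)^[β j] F) := by
        rw [hsp, mD_append, mD_append, mjl]
        simp


-- additive versions
lemma pd_add {F G : (Fin n → ℝ) → ℝ} (hF : Differentiable ℝ F) (hG : Differentiable ℝ G)
    (i : Fin n) : partialDeriv' i (F + G) = partialDeriv' i F + partialDeriv' i G := by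
  funext x
  simp only [partialDeriv', Pi.add_apply]
  rw [fderiv_add hF.differentiableAt hG.differentiableAt]
  simp

lemma pd_iter_add {F G : (Fin n → ℝ) → ℝ} (hF : ContDiff ℝ (⊤ : ℕ∞) F) (hG : ContDiff ℝ (⊤ : ℕ∞) G)
    (i : Fin n) (m : ℕ) :
    (partialDeriv' i)^[m] (F + G) = (partialDeriv' i)^[m] F + (partialDeriv' i)^[m] G := by
  induction m generalizing F G with
  | zero => simp
  | succ m ih =>
    simp only [Function.iterate_succ_apply]
    rw [pd_add (hF.differentiable (by simp)) (hG.differentiable (by simp))]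
    exact ih (smooth_pd hF i) (smooth_pd hG i)

lemma mD_add {F G : (Fin n → ℝ) → ℝ} (hF : ContDiff ℝ (⊤ : ℕ∞) F) (hG : ContDiff ℝ (⊤ : ℕ∞) G)
    (l : List (Fin n)) (β : Fin n → ℕ) :
    mD l β (F + G) = mD l β F + mD l β G := by
  induction l generalizing F G with
  | nil => simp [mD]
  | cons a l ih =>
    show (partialDeriv' a)^[β a] (mD l β (F + G)) = _
    rw [ih hF hG]
    exact pd_iter_add (smooth_mD hF l β) (smooth_mD hG l β) a (β a)

lemma multiDeriv_sub {F G : (Fin n → ℝ) → ℝ} (hF : ContDiff ℝ (⊤ : ℕ∞) F) (hG : ContDiff ℝ (⊤ : ℕ∞) G)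
    (β : Fin n → ℕ) : multiDeriv β (F - G) = multiDeriv β F - multiDeriv β G :=
  mD_sub hF hG _ β

lemma multiDeriv_add {F G : (Fin n → ℝ) → ℝ} (hF : ContDiff ℝ (⊤ : ℕ∞) F) (hG : ContDiff ℝ (⊤ : ℕ∞) G)
    (β : Fin n → ℕ) : multiDeriv β (F + G) = multiDeriv β F + multiDeriv β G :=
  mD_add hF hG _ β

lemma smooth_multiDeriv {F : (Fin n → ℝ) → ℝ} (hF : ContDiff ℝ (⊤ : ℕ∞) F) (β : Fin n → ℕ) :
    ContDiff ℝ (⊤ : ℕ∞) (multiDeriv β F) := smooth_mD hF _ β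

lemma pd_multiDeriv_comm {F : (Fin n → ℝ) → ℝ} (hF : ContDiff ℝ (⊤ : ℕ∞) F) (β : Fin n → ℕ)
    (j : Fin n) : partialDeriv' j (multiDeriv β F) = multiDeriv β (partialDeriv' j F) :=
  pd_mD_comm hF _ β j

-- polynomial correspondence
noncomputable def mpdL {R : Type*} [CommSemiring R] (l : List (Fin n)) (β : Fin n → ℕ)
    (p : MvPolynomial (Fin n) R) : MvPolynomial (Fin n) R :=
  l.foldr (fun i q => (pderiv i)^[β i] q) p

noncomputable def mpd {R : Type*} [CommSemiring R] (β : Fin n → ℕ)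
    (p : MvPolynomial (Fin n) R) : MvPolynomial (Fin n) R :=
  mpdL (List.finRange n) β p

lemma pd_iter_evp (i : Fin n) (m : ℕ) (p : MvPolynomial (Fin n) ℝ) :
    (partialDeriv' i)^[m] (evp p) = evp ((pderiv i)^[m] p) := by
  induction m generalizing p with
  | zero => simp
  | succ m ih =>
    simp only [Function.iterate_succ_apply]
    rw [pd_evp, ih]

lemma mD_evp (l : List (Fin n)) (β : Fin n → ℕ) (p : MvPolynomial (Fin n) ℝ) :
    mD l β (evp p) = evp (mpdL l β p) := by
  induction l generalizing p with
  | nil => simp [mD, mpdL]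
  | cons a l ih =>
    show (partialDeriv' a)^[β a] (mD l β (evp p)) = _
    rw [ih, pd_iter_evp]
    rfl

lemma multiDeriv_evp (β : Fin n → ℕ) (p : MvPolynomial (Fin n) ℝ) :
    multiDeriv β (evp p) = evp (mpd β p) := mD_evp _ β p

lemma mpdL_map (l : List (Fin n)) (β : Fin n → ℕ) (q : MvPolynomial (Fin n) ℚ) :
    MvPolynomial.map (algebraMap ℚ ℝ) (mpdL l β q) = mpdL l β (MvPolynomial.map (algebraMap ℚ ℝ) q) := by
  have hiter : ∀ (i : Fin n) (m : ℕ) (r : MvPolynomial (Fin n) ℚ),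
      MvPolynomial.map (algebraMap ℚ ℝ) ((pderiv i)^[m] r)
        = (pderiv i)^[m] (MvPolynomial.map (algebraMap ℚ ℝ) r) := by
    intro i m
    induction m with
    | zero => simp
    | succ m ih =>
      intro r
      simp only [Function.iterate_succ_apply]
      rw [ih, pderiv_map]
  induction l generalizing q with
  | nil => simp [mpdL]
  | cons a l ih =>
    show MvPolynomial.map (algebraMap ℚ ℝ) ((pderiv a)^[β a] (mpdL l β q)) = _
    rw [hiter, ih]
    rfl

-- the coordinate-freezing linear map
noncomputable def updL (j : Fin n) : (Fin n → ℝ) →L[ℝ] (Fin n → ℝ) :=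
  ContinuousLinearMap.id ℝ (Fin n → ℝ)
    - (ContinuousLinearMap.proj (R := ℝ) (φ := fun _ : Fin n => ℝ) j).smulRight (Pi.single j 1)

lemma updL_apply (j : Fin n) (x : Fin n → ℝ) : updL j x = Function.update x j 0 := by
  funext i
  rcases eq_or_ne i j with h | h
  · subst h
    simp [updL]
  · simp [updL, Function.update_of_ne h, Pi.single_eq_of_ne h]

lemma updL_single_ne (i j : Fin n) (h : i ≠ j) : updL j (Pi.single i 1) = Pi.single i 1 := by
  rw [updL_apply]
  funext a
  rcases eq_or_ne a j with h' | h'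
  · subst h'; simp [Pi.single_eq_of_ne (Ne.symm h)]
  · simp [Function.update_of_ne h']

lemma smooth_comp_updL {F : (Fin n → ℝ) → ℝ} (hF : ContDiff ℝ (⊤ : ℕ∞) F) (j : Fin n) :
    ContDiff ℝ (⊤ : ℕ∞) (fun x => F (Function.update x j 0)) := by
  have : (fun x => F (Function.update x j 0)) = F ∘ (updL j) := by
    funext x; simp [updL_apply]
  rw [this]
  exact hF.comp (updL j).contDiff

lemma pd_comp_updL {F : (Fin n → ℝ) → ℝ} (hF : ContDiff ℝ (⊤ : ℕ∞) F) {i j : Fin n} (h : i ≠ j) :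
    partialDeriv' i (fun x => F (Function.update x j 0))
      = fun x => (partialDeriv' i F) (Function.update x j 0) := by
  funext x
  have hcomp : (fun x => F (Function.update x j 0)) = F ∘ (updL j) := by
    funext y; simp [updL_apply]
  simp only [partialDeriv', hcomp]
  rw [fderiv_comp x (hF.differentiable (by simp)).differentiableAt (updL j).differentiableAt,
    (updL j).fderiv]
  simp only [ContinuousLinearMap.coe_comp', Function.comp_apply]
  rw [updL_single_ne i j h, updL_apply]

lemma pd_iter_comp_updL {F : (Fin n → ℝ) → ℝ} (hF : ContDiff ℝ (⊤ : ℕ∞) F) {i j : Fin n}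
    (h : i ≠ j) (m : ℕ) :
    (partialDeriv' i)^[m] (fun x => F (Function.update x j 0))
      = fun x => ((partialDeriv' i)^[m] F) (Function.update x j 0) := by
  induction m generalizing F with
  | zero => simp
  | succ m ih =>
    simp only [Function.iterate_succ_apply]
    rw [pd_comp_updL hF h, ih (smooth_pd hF i)]

lemma mD_comp_updL {F : (Fin n → ℝ) → ℝ} (hF : ContDiff ℝ (⊤ : ℕ∞) F) (l : List (Fin n))
    {β : Fin n → ℕ} {j : Fin n} (hβ : β j = 0) :
    mD l β (fun x => F (Function.update x j 0))
      = fun x => (mD l β F) (Function.update x j 0) := by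
  induction l generalizing F with
  | nil => simp [mD]
  | cons a l ih =>
    show (partialDeriv' a)^[β a] (mD l β (fun x => F (Function.update x j 0))) = _
    rw [ih hF]
    rcases eq_or_ne a j with h | h
    · subst h
      have h0 : mD (a :: l) β F = mD l β F := by
        show (partialDeriv' a)^[β a] (mD l β F) = _
        rw [hβ]
        rfl
      simp [hβ, h0]
    · exact pd_iter_comp_updL (smooth_mD hF l β) h (β a)

lemma multiDeriv_comp_updL {F : (Fin n → ℝ) → ℝ} (hF : ContDiff ℝ (⊤ : ℕ∞) F)
    {β : Fin n → ℕ} {j : Fin n} (hβ : β j = 0) :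
    multiDeriv β (fun x => F (Function.update x j 0))
      = fun x => (multiDeriv β F) (Function.update x j 0) :=
  mD_comp_updL hF _ hβ


def box (R : ℝ) : Set (Fin n → ℝ) := Set.Icc (fun _ => -R) (fun _ => R)

lemma box_compact (R : ℝ) : IsCompact (box (n := n) R) := isCompact_Icc

lemma mem_box {R : ℝ} {x : Fin n → ℝ} : x ∈ box R ↔ ∀ i, -R ≤ x i ∧ x i ≤ R := by
  constructor
  · rintro ⟨h1, h2⟩ i
    exact ⟨h1 i, h2 i⟩
  · intro h
    exact ⟨fun i => (h i).1, fun i => (h i).2⟩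

lemma update_mem_box {R : ℝ} {x : Fin n → ℝ} (hx : x ∈ box R) {j : Fin n} {t : ℝ}
    (ht : -R ≤ t ∧ t ≤ R) : Function.update x j t ∈ box R := by
  rw [mem_box] at hx ⊢
  intro i
  rcases eq_or_ne i j with h | h
  · subst h; simpa
  · simpa [Function.update_of_ne h] using hx i

lemma ftc_bound {W : (Fin n → ℝ) → ℝ} (hW : ContDiff ℝ (⊤ : ℕ∞) W) {R C0 C1 : ℝ}
    (hR : 0 ≤ R) (j : Fin n) {x : Fin n → ℝ} (hx : x ∈ box R)
    (h0 : |W (Function.update x j 0)| ≤ C0)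
    (h1 : ∀ t, -R ≤ t → t ≤ R → |partialDeriv' j W (Function.update x j t)| ≤ C1) :
    |W x| ≤ C0 + C1 * R := by
  set g : ℝ → ℝ := fun t => W (Function.update x j t) with hg
  have hgd : ∀ t : ℝ, HasDerivAt g (partialDeriv' j W (Function.update x j t)) t := by
    intro t
    have hc : HasDerivAt (fun t : ℝ => Function.update x j t) (Pi.single j 1) t := by
      have heq : (fun t : ℝ => Function.update x j t)
          = fun t : ℝ => Function.update x j 0 + t • Pi.single (M := fun _ : Fin n => ℝ) j 1 := by
        funext t
        funext i
        rcases eq_or_ne i j with h | h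
        · subst h; simp
        · simp [Function.update_of_ne h, Pi.single_eq_of_ne h]
      rw [heq]
      simpa using ((hasDerivAt_id t).smul_const (Pi.single (M := fun _ : Fin n => ℝ) j 1)).const_add
        (Function.update x j 0)
    have := ((hW.differentiable (by simp) (Function.update x j t)).hasFDerivAt).comp_hasDerivAt t hc
    exact this
  have hseg : ∀ t ∈ Set.Icc (-R) R, HasDerivWithinAt g
      (partialDeriv' j W (Function.update x j t)) (Set.Icc (-R) R) t :=
    fun t _ => (hgd t).hasDerivWithinAt
  have hxj : x j ∈ Set.Icc (-R) R := by
    rw [mem_box] at hx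
    exact ⟨(hx j).1, (hx j).2⟩
  have h0m : (0 : ℝ) ∈ Set.Icc (-R) R := by constructor <;> linarith
  have key := (convex_Icc (-R) R).norm_image_sub_le_of_norm_hasDerivWithin_le hseg
    (fun t ht => by simpa using h1 t ht.1 ht.2) h0m hxj
  have hgx : g (x j) = W x := by
    rw [hg]
    simp
  have : |g (x j) - g 0| ≤ C1 * R := by
    calc |g (x j) - g 0| ≤ C1 * ‖x j - 0‖ := key
    _ ≤ C1 * R := by
        have hC1 : 0 ≤ C1 := le_trans (abs_nonneg _) (h1 0 (by linarith) hR)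
        have : ‖x j - 0‖ ≤ R := by
          rw [sub_zero, Real.norm_eq_abs, abs_le]
          exact ⟨hxj.1, hxj.2⟩
        exact mul_le_mul_of_nonneg_left this hC1
  calc |W x| = |g 0 + (g (x j) - g 0)| := by rw [← hgx]; ring_nf
  _ ≤ |g 0| + |g (x j) - g 0| := abs_add_le _ _
  _ ≤ C0 + C1 * R := add_le_add h0 this

-- polynomial antiderivative (over ℚ)
noncomputable def intPoly (j : Fin n) (q : MvPolynomial (Fin n) ℚ) : MvPolynomial (Fin n) ℚ :=
  (AddMonoidAlgebra.coeff q).sum fun m c => MvPolynomial.monomial (m + Finsupp.single j 1) (c / (m j + 1))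

lemma intPoly_monomial (j : Fin n) (m : Fin n →₀ ℕ) (c : ℚ) :
    intPoly j (MvPolynomial.monomial m c)
      = MvPolynomial.monomial (m + Finsupp.single j 1) (c / (m j + 1)) := by
  unfold intPoly
  rw [MvPolynomial.sum_monomial_eq]
  simp

lemma intPoly_add (j : Fin n) (p q : MvPolynomial (Fin n) ℚ) :
    intPoly j (p + q) = intPoly j p + intPoly j q := by
  unfold intPoly
  rw [AddMonoidAlgebra.coeff_add, Finsupp.sum_add_index']
  · intro m; simp
  · intro m c1 c2; rw [add_div, map_add]

lemma single_apply_ne {i a : Fin n} (h : a ≠ i) : (Finsupp.single i 1 : Fin n →₀ ℕ) a = 0 := by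
  rw [Finsupp.single_apply, if_neg (fun hh => h hh.symm)]

lemma pderiv_intPoly_self (j : Fin n) (q : MvPolynomial (Fin n) ℚ) :
    pderiv j (intPoly j q) = q := by
  induction q using MvPolynomial.induction_on' with
  | add p q hp hq => rw [intPoly_add, map_add, hp, hq]
  | monomial m c =>
    rw [intPoly_monomial, pderiv_monomial]
    have h1 : ((m + Finsupp.single j 1 : Fin n →₀ ℕ)) j = m j + 1 := by
      rw [Finsupp.add_apply, Finsupp.single_apply, if_pos rfl]
    have h2 : (m + Finsupp.single j 1 - Finsupp.single j 1 : Fin n →₀ ℕ) = m := by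
      ext a
      rw [Finsupp.tsub_apply, Finsupp.add_apply]
      omega
    rw [h1, h2]
    have h3 : c / ((m j : ℚ) + 1) * ((m j : ℕ) + 1 : ℕ) = c := by
      push_cast
      rw [div_mul_cancel₀]
      positivity
    rw [h3]

lemma pderiv_intPoly_ne (i j : Fin n) (h : i ≠ j) (q : MvPolynomial (Fin n) ℚ) :
    pderiv i (intPoly j q) = intPoly j (pderiv i q) := by
  induction q using MvPolynomial.induction_on' with
  | add p q hp hq => rw [intPoly_add, map_add, map_add, hp, hq, intPoly_add]
  | monomial m c =>
    rw [intPoly_monomial, pderiv_monomial, pderiv_monomial, intPoly_monomial]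
    have hji : j ≠ i := fun hh => h hh.symm
    have h1 : ((m + Finsupp.single j 1 : Fin n →₀ ℕ)) i = m i := by
      rw [Finsupp.add_apply, single_apply_ne h]
      omega
    have h2 : ((m - Finsupp.single i 1 : Fin n →₀ ℕ)) j = m j := by
      rw [Finsupp.tsub_apply, single_apply_ne hji]
      omega
    have h3 : (m + Finsupp.single j 1 - Finsupp.single i 1 : Fin n →₀ ℕ)
        = m - Finsupp.single i 1 + Finsupp.single j 1 := by
      ext a
      simp only [Finsupp.tsub_apply, Finsupp.add_apply, Finsupp.single_apply]
      rcases eq_or_ne j a with ha | ha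
      · rcases eq_or_ne i a with hb | hb
        · exact absurd (hb.trans ha.symm) h
        · rw [if_pos ha, if_neg hb]
          omega
      · rw [if_neg ha]
        rcases eq_or_ne i a with hb | hb
        · rw [if_pos hb]
          omega
        · rw [if_neg hb]
          omega
    rw [h1, h2, h3]
    congr 1
    ring

lemma eval_map_intPoly_zero (j : Fin n) (q : MvPolynomial (Fin n) ℚ) {x : Fin n → ℝ}
    (hx : x j = 0) :
    MvPolynomial.eval x (MvPolynomial.map (algebraMap ℚ ℝ) (intPoly j q)) = 0 := by
  induction q using MvPolynomial.induction_on' with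
  | add p q hp hq => rw [intPoly_add, map_add, map_add, hp, hq, add_zero]
  | monomial m c =>
    rw [intPoly_monomial, MvPolynomial.map_monomial, MvPolynomial.eval_monomial]
    have hj : j ∈ (m + Finsupp.single j 1 : Fin n →₀ ℕ).support := by
      rw [Finsupp.mem_support_iff, Finsupp.add_apply, Finsupp.single_apply, if_pos rfl]
      omega
    have hzero : ((m + Finsupp.single j 1 : Fin n →₀ ℕ)).prod (fun i e => x i ^ e) = 0 := by
      rw [Finsupp.prod]
      apply Finset.prod_eq_zero hj
      rw [hx]
      apply zero_pow
      rw [Finsupp.add_apply, Finsupp.single_apply, if_pos rfl]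
      omega
    rw [hzero, mul_zero]


lemma sw_base {B : Set (Fin n → ℝ)} (hB : IsCompact B) {F : (Fin n → ℝ) → ℝ}
    (hF : Continuous F) {δ : ℝ} (hδ : 0 < δ) :
    ∃ p : MvPolynomial (Fin n) ℝ, ∀ x ∈ B, |F x - evp p x| ≤ δ := by
  haveI : CompactSpace B := isCompact_iff_compactSpace.mp hB
  set coordF : Fin n → C(B, ℝ) := fun i =>
    ⟨fun x => (x : Fin n → ℝ) i, (continuous_apply i).comp continuous_subtype_val⟩ with hcoord
  set φ : MvPolynomial (Fin n) ℝ →ₐ[ℝ] C(B, ℝ) := MvPolynomial.aeval coordF with hφ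
  have hφeval : ∀ (p : MvPolynomial (Fin n) ℝ) (x : B), φ p x = evp p (x : Fin n → ℝ) := by
    intro p
    apply p.induction_on (motive := fun p => ∀ x : B, φ p x = evp p (x : Fin n → ℝ))
    · intro a x
      simp [hφ, evp]
    · intro p q hp hq x
      simp only [map_add, ContinuousMap.add_apply, hp x, hq x, evp_add, Pi.add_apply]
    · intro p i hp x
      have : evp (p * X i) (x : Fin n → ℝ) = evp p (x : Fin n → ℝ) * (x : Fin n → ℝ) i := by
        simp [evp]
      rw [this, map_mul]
      simp only [ContinuousMap.mul_apply, hp x]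
      congr 1
      simp [hφ, hcoord]
  have hsep : (φ.range).SeparatesPoints := by
    intro x y hxy
    have hne : (x : Fin n → ℝ) ≠ (y : Fin n → ℝ) := fun hh => hxy (Subtype.ext hh)
    obtain ⟨i, hi⟩ := Function.ne_iff.mp hne
    refine ⟨coordF i, ⟨coordF i, ⟨X i, by simp [hφ]⟩, rfl⟩, hi⟩
  obtain ⟨g, hg⟩ := ContinuousMap.exists_mem_subalgebra_near_continuousMap_of_separatesPoints
    φ.range hsep ⟨fun x : B => F x, hF.comp continuous_subtype_val⟩ δ hδ
  obtain ⟨p, hp⟩ := (AlgHom.mem_range φ).mp g.2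
  refine ⟨p, fun x hx => ?_⟩
  have := ContinuousMap.norm_coe_le_norm
    ((g : C(B, ℝ)) - ⟨fun x : B => F x, hF.comp continuous_subtype_val⟩) ⟨x, hx⟩
  have heq : ((g : C(B, ℝ)) - ⟨fun x : B => F x, hF.comp continuous_subtype_val⟩) ⟨x, hx⟩
      = evp p x - F x := by
    simp only [ContinuousMap.sub_apply]
    rw [show (g : C(B, ℝ)) = φ p from hp.symm]
    rw [hφeval p ⟨x, hx⟩]
    rfl
  rw [heq] at this
  rw [abs_sub_comm]
  calc |evp p x - F x| ≤ ‖(g : C(B, ℝ)) - ⟨fun x : B => F x, hF.comp continuous_subtype_val⟩‖ :=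
        by simpa using this
  _ ≤ δ := le_of_lt hg

lemma rat_approx {B : Set (Fin n → ℝ)} (hB : IsCompact B) (p : MvPolynomial (Fin n) ℝ)
    {δ : ℝ} (hδ : 0 < δ) :
    ∃ q : MvPolynomial (Fin n) ℚ, ∀ x ∈ B,
      |evp p x - evp (MvPolynomial.map (algebraMap ℚ ℝ) q) x| ≤ δ := by
  classical
  set S := p.support with hS
  set g : (Fin n → ℝ) → ℝ := fun x => ∑ m ∈ S, |MvPolynomial.eval x (MvPolynomial.monomial m (1:ℝ))| with hg
  have hgc : Continuous g := by
    apply continuous_finset_sum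
    intro m _
    exact ((smooth_evp (MvPolynomial.monomial m (1:ℝ))).continuous).abs
  obtain ⟨M, hM⟩ : ∃ M : ℝ, 0 ≤ M ∧ ∀ x ∈ B, g x ≤ M := by
    rcases B.eq_empty_or_nonempty with h | h
    · exact ⟨0, le_refl 0, by simp [h]⟩
    · obtain ⟨x₀, hx₀, hmax⟩ := hB.exists_isMaxOn h hgc.continuousOn
      refine ⟨max (g x₀) 0, le_max_right _ _, fun x hx => le_trans (hmax hx) (le_max_left _ _)⟩
  have hη : 0 < δ / (M + 1) := by
    apply div_pos hδ
    linarith [hM.1]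
  choose r hr using fun m : Fin n →₀ ℕ => exists_rat_near (K := ℝ) (p.coeff m) hη
  set q : MvPolynomial (Fin n) ℚ := ∑ m ∈ S, MvPolynomial.monomial m (r m) with hq
  refine ⟨q, fun x hx => ?_⟩
  have hps : evp p x = ∑ m ∈ S, p.coeff m * MvPolynomial.eval x (MvPolynomial.monomial m (1:ℝ)) := by
    conv_lhs => rw [evp, p.as_sum]
    rw [map_sum]
    apply Finset.sum_congr rfl
    intro m _
    rw [MvPolynomial.eval_monomial, MvPolynomial.eval_monomial, one_mul]
  have hqs : evp (MvPolynomial.map (algebraMap ℚ ℝ) q) x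
      = ∑ m ∈ S, (r m : ℝ) * MvPolynomial.eval x (MvPolynomial.monomial m (1:ℝ)) := by
    rw [evp, hq, map_sum, map_sum]
    apply Finset.sum_congr rfl
    intro m _
    rw [MvPolynomial.map_monomial, MvPolynomial.eval_monomial, MvPolynomial.eval_monomial, one_mul]
    simp [Rat.cast_def]
  rw [hps, hqs, ← Finset.sum_sub_distrib]
  calc |∑ m ∈ S, (p.coeff m * MvPolynomial.eval x (MvPolynomial.monomial m (1:ℝ))
          - (r m : ℝ) * MvPolynomial.eval x (MvPolynomial.monomial m (1:ℝ)))|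
      ≤ ∑ m ∈ S, |p.coeff m - (r m : ℝ)| * |MvPolynomial.eval x (MvPolynomial.monomial m (1:ℝ))| := by
        refine le_trans (Finset.abs_sum_le_sum_abs _ _) ?_
        apply Finset.sum_le_sum
        intro m _
        rw [← sub_mul, abs_mul]
    _ ≤ ∑ m ∈ S, (δ / (M + 1)) * |MvPolynomial.eval x (MvPolynomial.monomial m (1:ℝ))| := by
        apply Finset.sum_le_sum
        intro m _
        exact mul_le_mul_of_nonneg_right (le_of_lt (hr m)) (abs_nonneg _)
    _ = (δ / (M + 1)) * g x := by rw [hg, Finset.mul_sum]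
    _ ≤ (δ / (M + 1)) * M := mul_le_mul_of_nonneg_left (hM.2 x hx) (le_of_lt hη)
    _ ≤ δ := by
        rw [div_mul_eq_mul_div, div_le_iff₀ (by linarith [hM.1])]
        nlinarith [hM.1]


lemma pderiv_iter_intPoly_ne (i j : Fin n) (h : i ≠ j) (m : ℕ) (r : MvPolynomial (Fin n) ℚ) :
    (pderiv i)^[m] (intPoly j r) = intPoly j ((pderiv i)^[m] r) := by
  induction m generalizing r with
  | zero => simp
  | succ m ih =>
    simp only [Function.iterate_succ_apply]
    rw [pderiv_intPoly_ne i j h, ih]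

lemma mpdL_intPoly (l : List (Fin n)) {β : Fin n → ℕ} {j : Fin n} (hβ : β j = 0)
    (r : MvPolynomial (Fin n) ℚ) :
    mpdL l β (intPoly j r) = intPoly j (mpdL l β r) := by
  induction l generalizing r with
  | nil => simp [mpdL]
  | cons a l ih =>
    show (pderiv a)^[β a] (mpdL l β (intPoly j r)) = _
    rw [ih]
    rcases eq_or_ne a j with h | h
    · subst h
      have h0 : mpdL (a :: l) β r = mpdL l β r := by
        show (pderiv a)^[β a] (mpdL l β r) = _
        rw [hβ]
        rfl
      rw [hβ, h0]
      rfl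
    · exact pderiv_iter_intPoly_ne a j h (β a) (mpdL l β r)

lemma mpd_intPoly {β : Fin n → ℕ} {j : Fin n} (hβ : β j = 0) (r : MvPolynomial (Fin n) ℚ) :
    mpd β (intPoly j r) = intPoly j (mpd β r) := mpdL_intPoly _ hβ r

-- the bound profile
def bnd (k' J l : ℕ) : Fin n → ℕ := fun i =>
  if (i : ℕ) < J then k' else if (i : ℕ) = J then l else 0

lemma bnd_ne (k' J l l' : ℕ) {i : Fin n} (h : (i : ℕ) ≠ J) :
    bnd k' J l i = bnd k' J l' i := by
  unfold bnd
  split_ifs <;> rfl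

lemma bnd_succ (k' J : ℕ) : bnd (n := n) k' J k' = bnd k' (J + 1) 0 := by
  funext i
  unfold bnd
  split_ifs <;> omega

lemma bnd_high (k' J l l' : ℕ) (h : n ≤ J) : bnd (n := n) k' J l = bnd k' J l' := by
  funext i
  unfold bnd
  have := i.isLt
  split_ifs <;> omega

def Stmt (R : ℝ) (k' J l : ℕ) : Prop :=
  ∀ F : (Fin n → ℝ) → ℝ, ContDiff ℝ (⊤ : ℕ∞) F → ∀ δ : ℝ, 0 < δ →
    ∃ q : MvPolynomial (Fin n) ℚ, ∀ β : Fin n → ℕ, (∀ i, β i ≤ bnd k' J l i) →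
      ∀ x ∈ box (n := n) R,
        |multiDeriv β F x
          - multiDeriv β (evp (MvPolynomial.map (algebraMap ℚ ℝ) q)) x| ≤ δ

lemma stmt_base {R : ℝ} (k' : ℕ) : Stmt (n := n) R k' 0 0 := by
  intro F hF δ hδ
  obtain ⟨p, hp⟩ := sw_base (box_compact (n := n) R) hF.continuous (half_pos hδ)
  obtain ⟨q, hq⟩ := rat_approx (box_compact (n := n) R) p (half_pos hδ)
  refine ⟨q, fun β hβ x hx => ?_⟩
  have hβ0 : ∀ i, β i = 0 := by
    intro i
    have h := hβ i
    unfold bnd at h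
    split_ifs at h <;> omega
  rw [multiDeriv_eq_mD, multiDeriv_eq_mD, mD_zero _ (fun i _ => hβ0 i),
    mD_zero _ (fun i _ => hβ0 i)]
  calc |F x - evp (MvPolynomial.map (algebraMap ℚ ℝ) q) x|
      ≤ |F x - evp p x| + |evp p x - evp (MvPolynomial.map (algebraMap ℚ ℝ) q) x| := by
        have : F x - evp (MvPolynomial.map (algebraMap ℚ ℝ) q) x
            = (F x - evp p x) + (evp p x - evp (MvPolynomial.map (algebraMap ℚ ℝ) q) x) := by ring
        rw [this]
        exact abs_add_le _ _
    _ ≤ δ / 2 + δ / 2 := add_le_add (hp x hx) (hq x hx)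
    _ = δ := by ring

lemma bnd_at (k' J l : ℕ) (hJ : J < n) : bnd (n := n) k' J l ⟨J, hJ⟩ = l := by
  unfold bnd
  simp

lemma stmt_step {R : ℝ} (hR : 0 < R) (k' J l : ℕ) (hJ : J < n)
    (ih : Stmt (n := n) R k' J l) : Stmt (n := n) R k' J (l + 1) := by
  intro F hF δ hδ
  set j : Fin n := ⟨J, hJ⟩ with hj
  set δ' := δ / (1 + R) with hδ'
  have hδ'pos : 0 < δ' := div_pos hδ (by linarith)
  have hδ'δ : δ' * (1 + R) = δ := by
    rw [hδ']
    field_simp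
  set G : (Fin n → ℝ) → ℝ := fun x => F (Function.update x j 0) with hGdef
  have hGs : ContDiff ℝ (⊤ : ℕ∞) G := smooth_comp_updL hF j
  obtain ⟨p1, hp1⟩ := ih G hGs δ' hδ'pos
  set H : (Fin n → ℝ) → ℝ := partialDeriv' j F with hHdef
  have hHs : ContDiff ℝ (⊤ : ℕ∞) H := smooth_pd hF j
  obtain ⟨q1, hq1⟩ := ih H hHs δ' hδ'pos
  set q' : MvPolynomial (Fin n) ℚ := q1 - pderiv j p1 with hq'def
  set P : MvPolynomial (Fin n) ℚ := p1 + intPoly j q' with hPdef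
  refine ⟨P, fun β hβ x hx => ?_⟩
  set Pr := MvPolynomial.map (algebraMap ℚ ℝ) P with hPr
  set p1r := MvPolynomial.map (algebraMap ℚ ℝ) p1 with hp1r
  set q1r := MvPolynomial.map (algebraMap ℚ ℝ) q1 with hq1r
  have hPsmooth : ContDiff ℝ (⊤ : ℕ∞) (evp Pr) := smooth_evp Pr
  set E : (Fin n → ℝ) → ℝ := F - evp Pr with hEdef
  have hEs : ContDiff ℝ (⊤ : ℕ∞) E := hF.sub hPsmooth
  -- pderiv j P = q1
  have f1 : pderiv j P = q1 := by
    rw [hPdef, map_add, pderiv_intPoly_self, hq'def]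
    ring
  have f2 : partialDeriv' j (evp Pr) = evp q1r := by
    rw [pd_evp, hPr, pderiv_map, f1]
  have f3 : partialDeriv' j E = H - evp q1r := by
    rw [hEdef, pd_sub (hF.differentiable (by simp)) (hPsmooth.differentiable (by simp)), f2, hHdef]
  have goal_eq : multiDeriv β F x - multiDeriv β (evp Pr) x = multiDeriv β E x := by
    rw [hEdef, multiDeriv_sub hF hPsmooth]
    rfl
  rw [goal_eq]
  have hbnd1 : bnd (n := n) k' J (l+1) j = l + 1 := by
    rw [hj]
    exact bnd_at k' J (l+1) hJ
  have hbnd2 : bnd (n := n) k' J l j = l := by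
    rw [hj]
    exact bnd_at k' J l hJ
  have hβj : β j ≤ l + 1 := by
    have h := hβ j
    rw [hbnd1] at h
    exact h
  have hβne : ∀ i : Fin n, i ≠ j → β i ≤ bnd k' J l i := by
    intro i hi
    have hvne : (i : ℕ) ≠ J := by
      intro hv
      exact hi (Fin.ext hv)
    rw [← bnd_ne k' J (l+1) l hvne]
    exact hβ i
  rcases Nat.eq_zero_or_pos (β j) with hm | hm
  · -- case β j = 0 : use FTC bound
    have hββ : ∀ i, β i ≤ bnd k' J l i := by
      intro i
      rcases eq_or_ne i j with h | h
      · subst h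
        rw [hm]
        exact Nat.zero_le _
      · exact hβne i h
    set W := multiDeriv β E with hW
    have hWs : ContDiff ℝ (⊤ : ℕ∞) W := smooth_multiDeriv hEs β
    have hC1 : ∀ t, -R ≤ t → t ≤ R → |partialDeriv' j W (Function.update x j t)| ≤ δ' := by
      intro t ht1 ht2
      have hcomm : partialDeriv' j W = multiDeriv β (H - evp q1r) := by
        rw [hW, pd_multiDeriv_comm hEs β j, f3]
      rw [hcomm, multiDeriv_sub hHs (smooth_evp q1r), Pi.sub_apply]
      exact hq1 β hββ _ (update_mem_box hx ⟨ht1, ht2⟩)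
    have hC0 : |W (Function.update x j 0)| ≤ δ' := by
      set x0 := Function.update x j 0 with hx0
      have hx0box : x0 ∈ box R := update_mem_box hx ⟨by linarith, by linarith⟩
      have hx0j : x0 j = 0 := Function.update_self j 0 x
      -- decompose the polynomial part
      have hPsum : evp Pr = evp p1r + evp (MvPolynomial.map (algebraMap ℚ ℝ) (intPoly j q')) := by
        rw [hPr, hPdef, map_add, evp_add]
      have hIzero : multiDeriv β (evp (MvPolynomial.map (algebraMap ℚ ℝ) (intPoly j q'))) x0
          = 0 := by
        rw [multiDeriv_evp]
        show MvPolynomial.eval x0 (mpd β (MvPolynomial.map (algebraMap ℚ ℝ) (intPoly j q'))) = 0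
        rw [show mpd β (MvPolynomial.map (algebraMap ℚ ℝ) (intPoly j q'))
            = MvPolynomial.map (algebraMap ℚ ℝ) (mpd β (intPoly j q'))
          from (mpdL_map _ β (intPoly j q')).symm]
        rw [mpd_intPoly hm q']
        exact eval_map_intPoly_zero j (mpd β q') hx0j
      have hWx0 : W x0 = multiDeriv β F x0 - multiDeriv β (evp p1r) x0 := by
        rw [hW, hEdef, multiDeriv_sub hF hPsmooth, Pi.sub_apply, hPsum,
          multiDeriv_add (smooth_evp p1r) (smooth_evp _), Pi.add_apply, hIzero, add_zero]
      have hFG : multiDeriv β F x0 = multiDeriv β G x0 := by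
        have hh := congrFun (multiDeriv_comp_updL hF (β := β) (j := j) hm) x0
        rw [hGdef, hh]
        congr 1
        rw [hx0]
        simp
      rw [hWx0, hFG]
      exact hp1 β hββ x0 hx0box
    have := ftc_bound hWs hR.le j hx hC0 hC1
    calc |W x| ≤ δ' + δ' * R := this
    _ = δ' * (1 + R) := by ring
    _ = δ := hδ'δ
  · -- case β j ≥ 1
    set β' := Function.update β j (β j - 1) with hβ'def
    have hβ'bnd : ∀ i, β' i ≤ bnd k' J l i := by
      intro i
      rcases eq_or_ne i j with h | h
      · subst h
        rw [hβ'def, Function.update_self, hbnd2]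
        omega
      · rw [hβ'def, Function.update_of_ne h]
        exact hβne i h
    have hHq : ContDiff ℝ (⊤ : ℕ∞) (H - evp q1r) := hHs.sub (smooth_evp q1r)
    have key : multiDeriv β E = multiDeriv β' (H - evp q1r) := by
      rw [multiDeriv_L2 hEs β j, multiDeriv_L2 hHq β' j]
      have h1 : Function.update β' j 0 = Function.update β j 0 := by
        rw [hβ'def]
        simp [Function.update_idem]
      have h2 : β' j = β j - 1 := by
        rw [hβ'def]
        simp
      rw [h1, h2]
      conv_lhs => rw [show β j = (β j - 1) + 1 by omega]
      rw [Function.iterate_succ_apply, f3]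
    rw [key]
    simp only [multiDeriv_sub hHs (smooth_evp q1r), Pi.sub_apply]
    calc |multiDeriv β' H x - multiDeriv β' (evp q1r) x| ≤ δ' := hq1 β' hβ'bnd x hx
    _ ≤ δ := by
        rw [hδ']
        rw [div_le_iff₀ (by linarith)]
        nlinarith


lemma stmt_congr {R : ℝ} {k' J l J' l' : ℕ} (h : bnd (n := n) k' J l = bnd k' J' l')
    (hs : Stmt (n := n) R k' J' l') : Stmt (n := n) R k' J l := by
  intro F hF δ hδ
  obtain ⟨q, hq⟩ := hs F hF δ hδ
  exact ⟨q, fun β hβ => hq β (fun i => h ▸ hβ i)⟩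

lemma stmt_all {R : ℝ} (hR : 0 < R) (k' : ℕ) : ∀ J l, Stmt (n := n) R k' J l := by
  intro J
  induction J with
  | zero =>
    intro l
    induction l with
    | zero => exact stmt_base k'
    | succ l ihl =>
      by_cases hn : 0 < n
      · exact stmt_step hR k' 0 l hn ihl
      · exact stmt_congr (bnd_high k' 0 (l+1) l (by omega)) ihl
  | succ J ihJ =>
    intro l
    induction l with
    | zero => exact stmt_congr (bnd_succ k' J).symm (ihJ k')
    | succ l ihl =>
      by_cases hn : J + 1 < n
      · exact stmt_step hR k' (J+1) l hn ihl
      · exact stmt_congr (bnd_high k' (J+1) (l+1) l (by omega)) ihl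

end RPD

/-- For every compact `K ⊆ ℝⁿ`, `k ∈ ℕ`, smooth `F : ℝⁿ → ℝ`, and
`ε > 0`, there is a polynomial function `P' : ℝⁿ → ℝ` with rational coefficients
such that `max_{|β| ≤ k} sup_{x ∈ K} |(D^β F)(x) − (D^β P')(x)| < ε`; i.e. the
rational polynomial functions are dense in the smooth functions w.r.t. `d_K^k`. -/
theorem rational_poly_dense_in_smooth {n k : ℕ} (K : Set (Fin n → ℝ))
    (hK : IsCompact K) (F : (Fin n → ℝ) → ℝ) (hF : ContDiff ℝ (⊤ : ℕ∞) F) :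
    ∀ ε > (0 : ℝ), ∃ P' : (Fin n → ℝ) → ℝ,
      (∃ q : MvPolynomial (Fin n) ℚ,
        P' = fun x => MvPolynomial.eval x (q.map (algebraMap ℚ ℝ))) ∧
      sSup {y : ℝ | ∃ β : Fin n → ℕ, ∃ x ∈ K, (∑ i, β i) ≤ k ∧
        y = |multiDeriv β F x - multiDeriv β P' x|} < ε := by
  intro ε hε
  obtain ⟨r, hr⟩ := hK.isBounded.subset_closedBall 0
  set R := max r 1 with hRdef
  have hR : 0 < R := lt_of_lt_of_le one_pos (le_max_right r 1)
  have hKB : K ⊆ RPD.box R := by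
    intro x hx
    rw [RPD.mem_box]
    intro i
    have hxr : ‖x‖ ≤ r := by
      have := hr hx
      rwa [Metric.mem_closedBall, dist_zero_right] at this
    have hxi : |x i| ≤ ‖x‖ := by
      rw [← Real.norm_eq_abs]
      exact norm_le_pi_norm x i
    have : |x i| ≤ R := le_trans (le_trans hxi hxr) (le_max_left r 1)
    rw [abs_le] at this
    exact this
  obtain ⟨q, hq⟩ := RPD.stmt_all hR k n 0 F hF (ε/2) (half_pos hε)
  refine ⟨RPD.evp (MvPolynomial.map (algebraMap ℚ ℝ) q), ⟨q, rfl⟩, ?_⟩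
  have hb : ∀ y ∈ {y : ℝ | ∃ β : Fin n → ℕ, ∃ x ∈ K, (∑ i, β i) ≤ k ∧
      y = |multiDeriv β F x - multiDeriv β (RPD.evp (MvPolynomial.map (algebraMap ℚ ℝ) q)) x|},
      y ≤ ε / 2 := by
    rintro y ⟨β, x, hxK, hβsum, rfl⟩
    apply hq β ?_ x (hKB hxK)
    intro i
    have h1 : β i ≤ ∑ i', β i' :=
      Finset.single_le_sum (f := β) (fun _ _ => Nat.zero_le _) (Finset.mem_univ i)
    have h2 : RPD.bnd (n := n) k n 0 i = k := by
      unfold RPD.bnd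
      rw [if_pos i.isLt]
    omega
  calc sSup {y : ℝ | ∃ β : Fin n → ℕ, ∃ x ∈ K, (∑ i, β i) ≤ k ∧
        y = |multiDeriv β F x - multiDeriv β (RPD.evp (MvPolynomial.map (algebraMap ℚ ℝ) q)) x|}
      ≤ ε / 2 := Real.sSup_le hb (by linarith)
    _ < ε := by linarith
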